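/- Let HT_k : ℝⁿ → ℝⁿ denote the hard thresholding operator that keeps the k largest entries of a vector in absolute value and sets the rest to zero. If v ∈ ℝⁿ and b* ∈ ℝⁿ has at most k nonzero entries (‖b*‖₀ ≤ k), then setting b = HT_k(b* + v) and letting I = supp(b) ∪ supp(b*), we have ‖b - b*‖₂ ≤ 2‖v restricted to I‖₂. -/
import Mathlib


open Finset

/-- Euclidean norm of a vector in ℝⁿ. -/
noncomputable def en2 {n : ℕ} (v : Fin n → ℝ) : ℝ := Real.sqrt (∑ i, (v i) ^ 2)

/-- Restriction of a vector to a set of coordinates. -/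
def restr {n : ℕ} (S : Set (Fin n)) [DecidablePred (· ∈ S)] (v : Fin n → ℝ) : Fin n → ℝ :=
  fun i => if i ∈ S then v i else 0

/-- `b` is a result of hard thresholding `u` at level `k`: there is a set `S` of `k`
coordinates containing the `k` largest entries of `u` in absolute value such that `b`
equals `u` on `S` and vanishes outside. -/
def IsHardThreshold {n : ℕ} (k : ℕ) (u b : Fin n → ℝ) : Prop :=
  ∃ S : Finset (Fin n), S.card = k ∧
    (∀ i ∈ S, ∀ j ∉ S, |u j| ≤ |u i|) ∧
    b = fun i => if i ∈ S then u i else 0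

lemma en2_le_two_of_sq {n : ℕ} (x y : Fin n → ℝ) (h : ∑ i, x i ^ 2 ≤ 4 * ∑ i, y i ^ 2) :
    en2 x ≤ 2 * en2 y := by
  unfold en2
  rw [show (2:ℝ) = Real.sqrt 4 by
        rw [show (4:ℝ) = 2 ^ 2 by norm_num, Real.sqrt_sq]; norm_num,
      ← Real.sqrt_mul (by norm_num)]
  exact Real.sqrt_le_sqrt h

/-- If ‖b*‖₀ ≤ k and b = HT_k(b* + v), then with I = supp(b) ∪ supp(b*),
‖b - b*‖₂ ≤ 2‖v restricted to I‖₂. -/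
theorem hard_threshold_error_bound {n : ℕ} (k : ℕ) (v bstar b : Fin n → ℝ)
    (hsparse : {i | bstar i ≠ 0}.toFinset.card ≤ k)
    (hb : IsHardThreshold k (fun i => bstar i + v i) b) :
    en2 (fun i => b i - bstar i) ≤
      2 * en2 (restr ({i | b i ≠ 0} ∪ {i | bstar i ≠ 0}) v) := by
  classical
  obtain ⟨S, hScard, hSmax, hbdef⟩ := hb
  apply en2_le_two_of_sq
  set u : Fin n → ℝ := fun i => bstar i + v i with hu
  set W : Fin n → ℝ := restr ({i | b i ≠ 0} ∪ {i | bstar i ≠ 0}) v with hW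
  have hWdef : ∀ i, W i = if b i ≠ 0 ∨ bstar i ≠ 0 then v i else 0 := by
    intro i
    simp only [hW, restr, Set.mem_union, Set.mem_setOf_eq]
  have hbS : ∀ i ∈ S, b i = u i := by
    intro i hi; rw [hbdef]; simp [hi]
  have hbnS : ∀ i ∉ S, b i = 0 := by
    intro i hi; rw [hbdef]; simp [hi]
  set T : Finset (Fin n) := {i | bstar i ≠ 0}.toFinset with hT
  have hTmem : ∀ i, i ∈ T ↔ bstar i ≠ 0 := by
    intro i; simp [hT]
  have hTcard : T.card ≤ k := hsparse
  have hWnonneg : ∀ i, (0:ℝ) ≤ W i ^ 2 := fun i => sq_nonneg _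
  -- on S, the error coincides with W
  have hS_eq : ∀ i ∈ S, (b i - bstar i) ^ 2 = W i ^ 2 := by
    intro i hi
    have h1 : b i - bstar i = v i := by rw [hbS i hi]; simp [hu]
    rw [hWdef i]
    by_cases hc : b i ≠ 0 ∨ bstar i ≠ 0
    · rw [if_pos hc, h1]
    · push_neg at hc
      rw [if_neg (by push_neg; exact hc), hc.1, hc.2]; ring
  -- on S \ T, u coincides with W
  have hST_eq : ∀ j ∈ S \ T, u j ^ 2 = W j ^ 2 := by
    intro j hj
    rw [Finset.mem_sdiff] at hj
    have hjb : bstar j = 0 := by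
      by_contra h; exact hj.2 ((hTmem j).mpr h)
    have hvj : v j = u j := by simp [hu, hjb]
    rw [hWdef j]
    by_cases hc : b j ≠ 0 ∨ bstar j ≠ 0
    · rw [if_pos hc, hvj]
    · push_neg at hc
      have : u j = 0 := by rw [← hbS j hj.1]; exact hc.1
      rw [if_neg (by push_neg; exact hc), this]
  -- on T \ S, v coincides with W
  have hTS_eq : ∀ i ∈ T \ S, v i ^ 2 = W i ^ 2 := by
    intro i hi
    rw [Finset.mem_sdiff] at hi
    have : bstar i ≠ 0 := (hTmem i).mp hi.1
    rw [hWdef i, if_pos (Or.inr this)]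
  -- split the sum
  have hsplit : ∑ i, (b i - bstar i) ^ 2
      = ∑ i ∈ S, W i ^ 2 + ∑ i ∈ T \ S, bstar i ^ 2 := by
    rw [← Finset.sum_add_sum_compl S]
    congr 1
    · exact Finset.sum_congr rfl hS_eq
    · rw [show ∑ i ∈ Sᶜ, (b i - bstar i) ^ 2 = ∑ i ∈ Sᶜ, bstar i ^ 2 from
        Finset.sum_congr rfl (fun i hi => by
          rw [hbnS i (by simpa using hi)]; ring)]
      refine (Finset.sum_subset ?_ ?_).symm
      · intro i hi
        rw [Finset.mem_sdiff] at hi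
        simpa using hi.2
      · intro i hi hni
        have : bstar i = 0 := by
          by_contra h
          exact hni (Finset.mem_sdiff.mpr ⟨(hTmem i).mpr h, by simpa using hi⟩)
        rw [this]; ring
  -- bound the off-support part
  have hbstar_bound : ∀ i ∈ T \ S, bstar i ^ 2 ≤ 2 * W i ^ 2 + 2 * u i ^ 2 := by
    intro i hi
    have hv : v i ^ 2 = W i ^ 2 := hTS_eq i hi
    have : bstar i = u i - v i := by simp [hu]
    rw [← hv, this]
    nlinarith [sq_nonneg (u i + v i)]
  -- the key cardinality/threshold comparison
  have hcard2 : (T \ S).card ≤ (S \ T).card := by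
    have h1 : (T \ S).card + (T ∩ S).card = T.card := Finset.card_sdiff_add_card_inter T S
    have h2 : (S \ T).card + (S ∩ T).card = S.card := Finset.card_sdiff_add_card_inter S T
    have h3 : (T ∩ S).card = (S ∩ T).card := by rw [Finset.inter_comm]
    omega
  have husum : ∑ i ∈ T \ S, u i ^ 2 ≤ ∑ j ∈ S \ T, u j ^ 2 := by
    by_cases hne : (T \ S).Nonempty
    · set M : ℝ := (T \ S).sup' hne (fun i => u i ^ 2) with hM
      have hMle : ∀ i ∈ T \ S, u i ^ 2 ≤ M := fun i hi => Finset.le_sup' (fun i => u i ^ 2) hi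
      have hMge : ∀ j ∈ S \ T, M ≤ u j ^ 2 := by
        intro j hj
        apply Finset.sup'_le
        intro i hi
        rw [Finset.mem_sdiff] at hi hj
        have habs : |u i| ≤ |u j| := hSmax j hj.1 i hi.2
        calc u i ^ 2 = |u i| ^ 2 := (sq_abs _).symm
          _ ≤ |u j| ^ 2 := by gcongr
          _ = u j ^ 2 := sq_abs _
      have hM0 : 0 ≤ M := by
        obtain ⟨i, hi⟩ := hne
        exact le_trans (sq_nonneg (u i)) (hMle i hi)
      calc ∑ i ∈ T \ S, u i ^ 2 ≤ (T \ S).card • M := Finset.sum_le_card_nsmul _ _ _ hMle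
        _ ≤ (S \ T).card • M := by
            simp only [nsmul_eq_mul]
            exact mul_le_mul_of_nonneg_right (by exact_mod_cast hcard2) hM0
        _ ≤ ∑ j ∈ S \ T, u j ^ 2 := Finset.card_nsmul_le_sum _ _ _ hMge
    · rw [Finset.not_nonempty_iff_eq_empty] at hne
      rw [hne, Finset.sum_empty]
      exact Finset.sum_nonneg (fun j _ => sq_nonneg _)
  -- put everything together
  have hsum1 : ∑ i ∈ T \ S, bstar i ^ 2
      ≤ 2 * ∑ i ∈ T \ S, W i ^ 2 + 2 * ∑ j ∈ S \ T, W j ^ 2 := by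
    calc ∑ i ∈ T \ S, bstar i ^ 2
        ≤ ∑ i ∈ T \ S, (2 * W i ^ 2 + 2 * u i ^ 2) := Finset.sum_le_sum hbstar_bound
      _ = 2 * ∑ i ∈ T \ S, W i ^ 2 + 2 * ∑ i ∈ T \ S, u i ^ 2 := by
          rw [Finset.sum_add_distrib, Finset.mul_sum, Finset.mul_sum]
      _ ≤ 2 * ∑ i ∈ T \ S, W i ^ 2 + 2 * ∑ j ∈ S \ T, u j ^ 2 := by linarith
      _ = 2 * ∑ i ∈ T \ S, W i ^ 2 + 2 * ∑ j ∈ S \ T, W j ^ 2 := by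
          rw [Finset.sum_congr rfl hST_eq]
  have hsub1 : ∑ j ∈ S \ T, W j ^ 2 ≤ ∑ j ∈ S, W j ^ 2 :=
    Finset.sum_le_sum_of_subset_of_nonneg (Finset.sdiff_subset) (fun i _ _ => hWnonneg i)
  have hsub2 : ∑ i ∈ S, W i ^ 2 + ∑ i ∈ T \ S, W i ^ 2 ≤ ∑ i, W i ^ 2 := by
    rw [← Finset.sum_union (Finset.disjoint_sdiff)]
    exact Finset.sum_le_sum_of_subset_of_nonneg (Finset.subset_univ _) (fun i _ _ => hWnonneg i)
  have hSnonneg : 0 ≤ ∑ i ∈ S, W i ^ 2 := Finset.sum_nonneg (fun i _ => hWnonneg i)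
  have hTSnonneg : 0 ≤ ∑ i ∈ T \ S, W i ^ 2 := Finset.sum_nonneg (fun i _ => hWnonneg i)
  rw [hsplit]
  linarith
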